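/- Let ℓ ≥ 1 and 0 ≤ m ≤ ℓ. For every strict partition μ ∈ F_1^m(Λ_ℓ), one has m(μ) = ℓ − 2m, where m(λ) denotes the number of parts of λ congruent to 1 modulo 3 minus the number of parts of λ congruent to 2 modulo 3. -/

import Mathlib

open scoped BigOperators

/-- A partition, represented canonically as the multiset of its (positive) parts. -/
structure Ptn where
  parts : Multiset ℕ
  pos : ∀ x ∈ parts, 0 < x

namespace Ptn

/-- Build a partition from an arbitrary multiset of naturals by discarding zero parts. -/
def of (s : Multiset ℕ) : Ptn :=
  ⟨s.filter (fun x => 0 < x), fun _ hx => (Multiset.mem_filter.mp hx).2⟩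

/-- The empty partition. -/
def empty : Ptn := ⟨0, by simp⟩

/-- The `i`-th largest part (`0`-indexed); `0` if `i` is at least the number of parts. -/
def part (l : Ptn) (i : ℕ) : ℕ :=
  ((l.parts.sort (· ≤ ·)).reverse).getD i 0

/-- The number of (positive) parts. -/
def length (l : Ptn) : ℕ := Multiset.card l.parts

/-- The size `|λ|`, i.e. the number being partitioned. -/
def size (l : Ptn) : ℕ := l.parts.sum

/-- A partition is strict if all its parts are distinct. -/
def Strict (l : Ptn) : Prop := l.parts.Nodup

/-- The conjugate partition. -/
def conj (l : Ptn) : Ptn :=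
  of ((Multiset.range (l.part 0)).map
    (fun j => Multiset.card (l.parts.filter (fun x => j < x))))

end Ptn

/-- The rectangular partition `□(n,m)` with `n` rows of length `m`. -/
def rect (n m : ℕ) : Ptn := Ptn.of (Multiset.replicate n m)

/-- The partition obtained by multiplying every part by `r`. -/
def scaleP (r : ℕ) (l : Ptn) : Ptn := Ptn.of (l.parts.map (fun a => r * a))

/-- Diagram containment: every part of `small` is at most the corresponding part of `big`. -/
def Contains (big small : Ptn) : Prop := ∀ i, small.part i ≤ big.part i

/-- The beta-set (first-column hook lengths) `{λ_i + m - 1 - i : i < m}` of `l`,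
computed with `m` beads (`m` at least the number of parts). -/
def betaSet (l : Ptn) (m : ℕ) : Finset ℕ :=
  (Finset.range m).image (fun i => l.part i + (m - 1 - i))

/-- The partition encoded by a finite set of bead positions: each bead contributes a part
equal to the number of empty positions (holes) below it. -/
def ptnOfBeads (B : Finset ℕ) : Ptn :=
  Ptn.of (B.val.map (fun p => p - (B.filter (fun q => q < p)).card))

/-- Levels of the beads on runner `k` of the `r`-abacus of `l`,
drawn with `r * l.length` beads (a multiple of `r`). -/
def runnerLevels (r : ℕ) (l : Ptn) (k : ℕ) : Finset ℕ :=
  (Finset.range (l.part 0 + r * l.length + 1)).filter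
    (fun s => r * s + k ∈ betaSet l (r * l.length))

/-- The `k`-th component `λ[k]` of the `r`-quotient of `l`. -/
def quotP (r : ℕ) (l : Ptn) (k : ℕ) : Ptn := ptnOfBeads (runnerLevels r l k)

/-- The `r`-core of `l`: push all beads of the `r`-abacus down as far as possible. -/
def coreP (r : ℕ) (l : Ptn) : Ptn :=
  ptnOfBeads ((Finset.range r).biUnion
    (fun k => (Finset.range (runnerLevels r l k).card).image (fun s => r * s + k)))

/-- The key of the bead at position `p` for the `r`-numbering of the beads `B`:
a bead which is the `j`-th lowest bead on runner `k` gets key `r * j + k`. -/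
def rKey (r : ℕ) (B : Finset ℕ) (p : ℕ) : ℕ :=
  r * (B.filter (fun q => q % r = p % r ∧ q < p)).card + p % r

/-- The number of inversions between the natural (increasing-position) numbering of the
beads `B` and the numbering by increasing `key`. -/
def inversions (key : ℕ → ℕ) (B : Finset ℕ) : ℕ :=
  ((B ×ˢ B).filter (fun pq => pq.1 < pq.2 ∧ key pq.2 < key pq.1)).card

/-- Exponent of the `r`-sign `δ_r`. -/
def rSignExp (r : ℕ) (l : Ptn) : ℕ :=
  inversions (rKey r (betaSet l (r * l.length))) (betaSet l (r * l.length))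

/-- The `r`-sign `δ_r(λ) ∈ {±1}`. -/
def rSign (r : ℕ) (l : Ptn) : ℤ := (-1) ^ rSignExp r l

/-- The key of the bead at position `p` for the `3`-bar numbering of the beads `B` of the
`3`-bar abacus: first the beads of runner `0` in increasing order, then the pairs of beads
on runners `2` and `1` paired off by increasing level (runner-`2` bead before
runner-`1` bead), then the remaining unpaired beads in increasing order. -/
def barKey (B : Finset ℕ) (p : ℕ) : ℕ :=
  let n0 := (B.filter (fun q => q % 3 = 0)).card
  let t := min ((B.filter (fun q => q % 3 = 1)).card)
              ((B.filter (fun q => q % 3 = 2)).card)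
  let rk := (B.filter (fun q => q % 3 = p % 3 ∧ q < p)).card
  if p % 3 = 0 then rk
  else if rk < t then (if p % 3 = 2 then n0 + 2 * rk else n0 + 2 * rk + 1)
  else n0 + 2 * t + (rk - t)

/-- Exponent of the `3`-bar sign `δ̄_3`.  The beads of the `3`-bar abacus of a strict
partition sit at the positions given by the parts. -/
def barSignExp (l : Ptn) : ℕ :=
  inversions (barKey l.parts.toFinset) l.parts.toFinset

/-- The `3`-bar sign `δ̄_3(λ) ∈ {±1}` of a strict partition. -/
def barSign3 (l : Ptn) : ℤ := (-1) ^ barSignExp l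

/-- The double `D(λ) = (λ_1,…,λ_l | λ_1 - 1,…,λ_l - 1)` (Frobenius notation)
of a strict partition `λ`, constructed row by row. -/
noncomputable def double (l : Ptn) : Ptn :=
  Ptn.of ((Multiset.range (l.length + l.part 0)).map (fun i =>
    (if i < l.length then l.part i + 1 else 0) +
      ((Finset.range (min i l.length)).filter (fun j => i + 1 ≤ j + l.part j)).card))

/-- The second component `λ^b[1] = D(λ)[1]` of the `3`-bar quotient of a strict
partition `λ`. -/
noncomputable def barQuot1 (l : Ptn) : Ptn := quotP 3 (double l) 1

/-- The staircase-like strict partition `Λ_ℓ = (3ℓ-2, 3ℓ-5, …, 7, 4, 1)`. -/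
def LamP (ℓ : ℕ) : Ptn := Ptn.of ((Multiset.range ℓ).map (fun i => 3 * i + 1))

/-- The staircase partition `Δ_ℓ = (ℓ, ℓ-1, …, 1)`. -/
def DelP (ℓ : ℕ) : Ptn := Ptn.of (Multiset.range (ℓ + 1))

/-- `F_1^m(Λ_ℓ)`: strict partitions obtained from `Λ_ℓ` by adding `m` cells, each
labelled `1`, where the cell in (0-indexed) column `j` is labelled `1` iff `j % 3 = 1`
(each row reads `0,1,0,0,1,0,…`). -/
def F1Lam (ℓ m : ℕ) : Set Ptn :=
  {mu | mu.Strict ∧ Contains mu (LamP ℓ) ∧ mu.size = (LamP ℓ).size + m ∧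
    ∀ i j, (LamP ℓ).part i ≤ j → j < mu.part i → j % 3 = 1}

/-- `F_1^m(Δ_ℓ)`: partitions obtained from `Δ_ℓ` by adding `m` cells, each labelled `1`,
where the cell `(i,j)` is labelled `1` iff `i + j` is odd. -/
def F1Del (ℓ m : ℕ) : Set Ptn :=
  {mu | Contains mu (DelP ℓ) ∧ mu.size = (DelP ℓ).size + m ∧
    ∀ i j, (DelP ℓ).part i ≤ j → j < mu.part i → (i + j) % 2 = 1}

/-- `(α, β)` is complementary relative to the rectangle `□(n,m)`:
`α ⊆ □(n,m)` and `β_i = m - α_{n+1-i}` for `1 ≤ i ≤ n` (0-indexed below). -/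
def Complementary (n m : ℕ) (a b : Ptn) : Prop :=
  a.length ≤ n ∧ a.part 0 ≤ m ∧ b.length ≤ n ∧
    ∀ i < n, b.part i = m - a.part (n - 1 - i)

/-- `W(n,m)`: the set of `(n,m)`-balanced partitions, i.e. partitions of `2nm` with at
most `2n` parts satisfying `μ_i + μ_{2n+1-i} = 2m` for `1 ≤ i ≤ n` (0-indexed below). -/
def W (n m : ℕ) : Set Ptn :=
  {mu | mu.size = 2 * n * m ∧ mu.length ≤ 2 * n ∧
    ∀ i < n, mu.part i + mu.part (2 * n - 1 - i) = 2 * m}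

/-! ### The ring of symmetric functions

We realise the ring of symmetric functions (with rational coefficients) as the
polynomial ring `ℚ[p_1, p_2, …]` in the power sums: the variable `X n` of
`MvPolynomial ℕ ℚ` stands for the power sum `p_{n+1}`. -/

abbrev SymF := MvPolynomial ℕ ℚ

open MvPolynomial

/-- `z_ρ = ∏ a^{m_a} m_a!` for a partition given as a multiset `ρ`. -/
def zval (s : Multiset ℕ) : ℚ :=
  s.toFinset.prod (fun a => (a : ℚ) ^ s.count a * (Nat.factorial (s.count a) : ℚ))

/-- The power sum product `p_ρ` of a multiset `ρ`. -/
noncomputable def pMult (s : Multiset ℕ) : SymF :=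
  (s.map (fun a => (X (a - 1) : SymF))).prod

/-- The complete homogeneous symmetric function `h_n = Σ_{ρ ⊢ n} z_ρ⁻¹ p_ρ`. -/
noncomputable def hSym (n : ℕ) : SymF :=
  ∑ ρ : Nat.Partition n, (zval ρ.parts)⁻¹ • pMult ρ.parts

/-- `h_k` for an integer index, vanishing for negative `k`. -/
noncomputable def hz (k : ℤ) : SymF := if k < 0 then 0 else hSym k.toNat

/-- The Schur function `S_λ`, via the Jacobi–Trudi formula
`S_λ = det(h_{λ_i - i + j})`. -/
noncomputable def schur (l : Ptn) : SymF :=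
  Matrix.det (Matrix.of (fun i j : Fin l.length =>
    hz ((l.part i.val : ℤ) + (j.val : ℤ) - (i.val : ℤ))))

/-- The plethysm `p_r ∘ f`: the algebra endomorphism sending each power sum `p_k`
to `p_{rk}`, i.e. substituting `x_i^r` for each variable `x_i`. -/
noncomputable def pleth (r : ℕ) (f : SymF) : SymF :=
  MvPolynomial.aeval (fun n => (X (r * (n + 1) - 1) : SymF)) f

/-- The `z`-weight of a power-sum monomial (exponent vector `d`). -/
def zfac (d : ℕ →₀ ℕ) : ℚ :=
  d.prod (fun i e => ((i : ℚ) + 1) ^ e * (Nat.factorial e : ℚ))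

/-- The Hall inner product, for which `⟨p_ρ, p_σ⟩ = δ_{ρσ} z_ρ` and the Schur
functions are orthonormal. -/
noncomputable def hall (f g : SymF) : ℚ :=
  f.support.sum (fun d => f.coeff d * g.coeff d * zfac d)

/-- The multi-Littlewood–Richardson coefficient `LR^λ_{μ^0,…,μ^{r-1}}`:
the multiplicity of `S_λ` in `S_{μ^0} ⋯ S_{μ^{r-1}}`. -/
noncomputable def LRmulti (lam : Ptn) (r : ℕ) (q : ℕ → Ptn) : ℚ :=
  hall ((Finset.range r).prod (fun k => schur (q k))) (schur lam)

/-- The Littlewood–Richardson coefficient `LR^λ_{α,β}`: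
the multiplicity of `S_λ` in `S_α · S_β`. -/
noncomputable def LR2 (lam a b : Ptn) : ℚ := hall (schur a * schur b) (schur lam)

/-- The irreducible symmetric group character `χ^μ(ρ)`, via the Frobenius formula
`χ^μ_ρ = ⟨S_μ, p_ρ⟩`. -/
noncomputable def chi (mu rho : Ptn) : ℚ := hall (schur mu) (pMult rho.parts)

/-- Symmetric functions in two alphabets `u`, `v`: `X (inl n)` is `p_{n+1}(u)` and
`X (inr n)` is `p_{n+1}(v)`. -/
abbrev SymF2 := MvPolynomial (ℕ ⊕ ℕ) ℚ

/-- `f ↦ f(u)`. -/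
noncomputable def toU : SymF →ₐ[ℚ] SymF2 :=
  aeval (fun n => (X (Sum.inl n) : SymF2))

/-- `f ↦ f(v)`. -/
noncomputable def toV : SymF →ₐ[ℚ] SymF2 :=
  aeval (fun n => (X (Sum.inr n) : SymF2))

/-- `f ↦ f(u - v)`, the difference of alphabets: `p_k ↦ p_k(u) - p_k(v)`. -/
noncomputable def toUV : SymF →ₐ[ℚ] SymF2 :=
  aeval (fun n => (X (Sum.inl n) : SymF2) - X (Sum.inr n))

/-! Row `i < ℓ` of `Λ_ℓ` has length `3 (ℓ - 1 - i) + 1 ≡ 1 (mod 3)`. In `μ ∈ F_1^m(Λ_ℓ)` such a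
row may grow by the cell in the next column (labelled `1`) but not by two cells, since the
column after that is labelled `0`; and no new row can start, since column `0` is labelled `0`.
So `μ` has exactly `ℓ` parts, each congruent to `1` or `2` mod `3`, and the parts congruent
to `2` are exactly the `m` rows that grew. -/

namespace Ptn

theorem part_eq_zero_of_length_le {l : Ptn} {i : ℕ} (h : l.length ≤ i) : l.part i = 0 := by
  unfold length at h
  simp [part, h]

theorem map_part_range (l : Ptn) :
    (List.range l.length).map l.part = (l.parts.sort (· ≤ ·)).reverse := by
  refine List.ext_getElem (by simp [length]) fun i _ h => ?_
  simp only [List.getElem_map, List.getElem_range, part]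
  exact List.getD_eq_getElem _ _ h

theorem parts_eq_map_part (l : Ptn) : l.parts = (Multiset.range l.length).map l.part := by
  rw [Multiset.range, Multiset.map_coe, map_part_range, Multiset.coe_reverse, Multiset.sort_eq]

theorem part_pos {l : Ptn} {i : ℕ} (h : i < l.length) : 0 < l.part i :=
  l.pos _ (by rw [parts_eq_map_part]; exact Multiset.mem_map_of_mem _ (Multiset.mem_range.2 h))

theorem size_eq_sum_part (l : Ptn) : l.size = ∑ i ∈ Finset.range l.length, l.part i := by
  rw [size, parts_eq_map_part]
  rfl

theorem card_filter_parts (l : Ptn) (p : ℕ → Prop) [DecidablePred p] :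
    Multiset.card (l.parts.filter p) =
      ((Finset.range l.length).filter (fun i => p (l.part i))).card := by
  rw [parts_eq_map_part, Multiset.filter_map, Multiset.card_map]
  rfl

end Ptn

theorem LamP_parts (ℓ : ℕ) : (LamP ℓ).parts = (Multiset.range ℓ).map (fun i => 3 * i + 1) := by
  show Multiset.filter _ ((Multiset.range ℓ).map _) = _
  refine Multiset.filter_eq_self.2 fun a ha => ?_
  obtain ⟨i, -, rfl⟩ := Multiset.mem_map.1 ha
  omega

theorem LamP_length (ℓ : ℕ) : (LamP ℓ).length = ℓ := by
  simp [Ptn.length, LamP_parts]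

theorem LamP_part {ℓ i : ℕ} (hi : i < ℓ) : (LamP ℓ).part i = 3 * (ℓ - 1 - i) + 1 := by
  have hsort : (LamP ℓ).parts.sort (· ≤ ·) = (List.range ℓ).map (fun i => 3 * i + 1) := by
    rw [LamP_parts, ← Multiset.map_sort (fun i => 3 * i + 1) _ (· ≤ ·) (· ≤ ·), Multiset.sort_range]
    intro a _ b _
    omega
  simp [Ptn.part, hsort, List.getD_eq_getElem?_getD, hi]

namespace F1Lam

variable {ℓ m : ℕ} {μ : Ptn}

theorem LamP_part_le_part (hμ : μ ∈ F1Lam ℓ m) (i : ℕ) :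
    (LamP ℓ).part i ≤ μ.part i :=
  hμ.2.1 i

theorem part_le_LamP_part_add_one (hμ : μ ∈ F1Lam ℓ m) {i : ℕ} (hi : i < ℓ) :
    μ.part i ≤ (LamP ℓ).part i + 1 := by
  by_contra! h
  have := hμ.2.2.2 i ((LamP ℓ).part i + 1) (by omega) h
  rw [LamP_part hi] at this
  omega

theorem length_eq (hμ : μ ∈ F1Lam ℓ m) : μ.length = ℓ := by
  refine le_antisymm (not_lt.1 fun h => ?_) (not_lt.1 fun h => ?_)
  · have := hμ.2.2.2 ℓ 0 (by simp [Ptn.part_eq_zero_of_length_le, LamP_length]) (Ptn.part_pos h)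
    omega
  · have := LamP_part_le_part hμ μ.length
    rw [LamP_part h, Ptn.part_eq_zero_of_length_le le_rfl] at this
    omega

theorem part_eq (hμ : μ ∈ F1Lam ℓ m) {i : ℕ} (hi : i < ℓ) :
    μ.part i = (LamP ℓ).part i + if μ.part i % 3 = 2 then 1 else 0 := by
  have h₁ := LamP_part_le_part hμ i
  have h₂ := part_le_LamP_part_add_one hμ hi
  rw [LamP_part hi] at h₁ h₂ ⊢
  split_ifs <;> omega

theorem part_mod_three (hμ : μ ∈ F1Lam ℓ m) {i : ℕ} (hi : i < ℓ) :
    μ.part i % 3 = 1 ∨ μ.part i % 3 = 2 := by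
  rw [part_eq hμ hi, LamP_part hi]
  split_ifs <;> omega

theorem card_filter_part_mod_three_eq_two (hμ : μ ∈ F1Lam ℓ m) :
    ((Finset.range ℓ).filter (fun i => μ.part i % 3 = 2)).card = m := by
  have hsize := hμ.2.2.1
  rw [Ptn.size_eq_sum_part, Ptn.size_eq_sum_part, length_eq hμ, LamP_length,
    Finset.sum_congr rfl fun i hi => part_eq hμ (Finset.mem_range.1 hi),
    Finset.sum_add_distrib, Finset.sum_boole] at hsize
  simpa using hsize

theorem card_filter_part_mod_three_eq_one_add_eq (hμ : μ ∈ F1Lam ℓ m) :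
    ((Finset.range ℓ).filter (fun i => μ.part i % 3 = 1)).card + m = ℓ := by
  have hmod : ∀ i ∈ Finset.range ℓ, ¬μ.part i % 3 = 1 ↔ μ.part i % 3 = 2 := fun i hi => by
    have := part_mod_three hμ (Finset.mem_range.1 hi)
    omega
  have hsplit := Finset.card_filter_add_card_filter_not (s := Finset.range ℓ)
    (fun i => μ.part i % 3 = 1)
  rwa [Finset.card_range, Finset.filter_congr hmod, card_filter_part_mod_three_eq_two hμ] at hsplit

end F1Lam

theorem stmt14_general (ℓ m : ℕ) (μ : Ptn) (hμ : μ ∈ F1Lam ℓ m) :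
    (Multiset.card (μ.parts.filter (fun a => a % 3 = 1)) : ℤ)
      - (Multiset.card (μ.parts.filter (fun a => a % 3 = 2)) : ℤ)
      = (ℓ : ℤ) - 2 * (m : ℤ) := by
  have h₁ := F1Lam.card_filter_part_mod_three_eq_one_add_eq hμ
  have h₂ := F1Lam.card_filter_part_mod_three_eq_two hμ
  rw [Ptn.card_filter_parts, Ptn.card_filter_parts, F1Lam.length_eq hμ]
  omega

/-- For every `μ ∈ F_1^m(Λ_ℓ)`, `m(μ) = ℓ - 2m`, where `m(λ)` is the number of parts
congruent to `1` mod `3` minus the number of parts congruent to `2` mod `3`. -/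
theorem stmt14 (ℓ m : ℕ) (hℓ : 1 ≤ ℓ) (hm : m ≤ ℓ) (μ : Ptn) (hμ : μ ∈ F1Lam ℓ m) :
    (Multiset.card (μ.parts.filter (fun a => a % 3 = 1)) : ℤ)
      - (Multiset.card (μ.parts.filter (fun a => a % 3 = 2)) : ℤ)
      = (ℓ : ℤ) - 2 * (m : ℤ) :=
  stmt14_general ℓ m μ hμ
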